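/- Let q > 0, q ≠ 1, and R_q = 2/(1-q) if 0 < q < 1, R_q = 2q/(q-1) if q > 1. Define Sin_q(x) = (𝓔_q(ix) − 𝓔_q(−ix))/(2i) and Cos_q(x) = (𝓔_q(ix) + 𝓔_q(−ix))/2, where 𝓔_q(z) = ∑_{n=0}^∞ z^n/{n}_q!. Then for every real x with |x| < R_q, the numbers Sin_q(x) and Cos_q(x) are real and satisfy −1 ≤ Cos_q(x) ≤ 1 and −1 ≤ Sin_q(x) ≤ 1. -/

import Mathlib

/-- The symbol `{n}_q = 2(1-q^n)/((1-q)(1+q^(n-1)))` (for `n ≥ 1`). -/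
noncomputable def qBrace (q : ℝ) (n : ℕ) : ℝ :=
  2 * (1 - q ^ n) / ((1 - q) * (1 + q ^ (n - 1)))

/-- The factorial `{n}_q! = {1}_q {2}_q ⋯ {n}_q`, with `{0}_q! = 1`. -/
noncomputable def qBraceFact (q : ℝ) (n : ℕ) : ℝ := ∏ k ∈ Finset.range n, qBrace q (k + 1)

/-- The radius `R_q = 2/(1-q)` for `0 < q < 1` and `R_q = 2q/(q-1)` for `q > 1`. -/
noncomputable def Rq (q : ℝ) : ℝ := if q < 1 then 2 / (1 - q) else 2 * q / (q - 1)

/-- The improved q-exponential function `𝓔_q(z) = ∑_{n=0}^∞ z^n/{n}_q!`. -/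
noncomputable def impExp (q : ℝ) (z : ℂ) : ℂ := ∑' n : ℕ, z ^ n / (qBraceFact q n : ℂ)

/-- The improved q-sine `Sin_q(x) = (𝓔_q(ix) − 𝓔_q(−ix))/(2i)`. -/
noncomputable def impSin (q : ℝ) (x : ℝ) : ℂ :=
  (impExp q (Complex.I * x) - impExp q (-(Complex.I * x))) / (2 * Complex.I)

/-- The improved q-cosine `Cos_q(x) = (𝓔_q(ix) + 𝓔_q(−ix))/2`. -/
noncomputable def impCos (q : ℝ) (x : ℝ) : ℂ :=
  (impExp q (Complex.I * x) + impExp q (-(Complex.I * x))) / 2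

/-!
Write `α = (1 - q) / 2`. The coefficients `c n = 1 / {n}_q!` satisfy
`(1 - q^(n+1)) c (n+1) = α (1 + q^n) c n`, which says that the formal series `f = ∑ c n X^n`
solves the q-difference equation `f(X) (1 - αX) = f(qX) (1 + αX)`. Multiplying this by its image
under `X ↦ -X` shows that `g(X) = f(X) f(-X)` satisfies `g(qX) = g(X)`, and since `q^n ≠ 1` for
`n ≥ 1` this forces `g = 1`. As `{n}_q → R_q`, the series converges absolutely for `|z| < R_q`,
so `𝓔_q(z) 𝓔_q(-z) = 1` there. The coefficients are real, so `𝓔_q(-ix)` is the conjugate of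
`𝓔_q(ix)`: this number lies on the unit circle, and `Cos_q x`, `Sin_q x` are its real and
imaginary parts.
-/

namespace PowerSeries

variable {R : Type*} [CommRing R] {q α : R} {f : R⟦X⟧}

theorem mul_one_sub_eq_rescale_mul_one_add
    (hf : ∀ k, (1 - q ^ (k + 1)) * coeff (k + 1) f = α * (1 + q ^ k) * coeff k f) :
    f * (1 - C α * X) = rescale q f * (1 + C α * X) := by
  ext (_ | k) <;> simp only [mul_sub, mul_add, mul_one, map_sub, map_add, coeff_rescale,
    mul_left_comm _ (C α), coeff_C_mul, coeff_zero_mul_X, coeff_succ_mul_X]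
  · ring
  · linear_combination hf k

theorem rescale_neg_one_C_mul_X (a : R) : rescale (-1) (C a * X) = -(C a * X) := by
  ext (_ | _ | n) <;> simp [coeff_C]

theorem rescale_mul_rescale_neg_one_self (h : f * (1 - C α * X) = rescale q f * (1 + C α * X)) :
    rescale q (f * rescale (-1) f) = f * rescale (-1) f := by
  have h' : rescale (-1) f * (1 + C α * X) = rescale (-q) f * (1 - C α * X) := by
    simpa [rescale_rescale, rescale_neg_one_C_mul_X, mul_comm q, sub_eq_add_neg]
      using congrArg (rescale (-1)) h
  have hunit : IsUnit ((1 - C α * X) * (1 + C α * X) : R⟦X⟧) := by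
    simp [isUnit_iff_constantCoeff]
  apply hunit.mul_left_cancel
  calc (1 - C α * X) * (1 + C α * X) * rescale q (f * rescale (-1) f)
      = rescale q f * (1 + C α * X) * (rescale (-q) f * (1 - C α * X)) := by
        rw [map_mul, rescale_rescale, neg_one_mul]; ring
    _ = (1 - C α * X) * (1 + C α * X) * (f * rescale (-1) f) := by
        rw [← h, ← h']; ring

theorem coeff_eq_zero_of_rescale_eq [IsDomain R] {g : R⟦X⟧} (hg : rescale q g = g) {n : ℕ}
    (hn : q ^ n ≠ 1) : coeff n g = 0 := by
  have := congrArg (coeff n) hg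
  rw [coeff_rescale] at this
  exact (mul_eq_zero.mp (by linear_combination this : (q ^ n - 1) * coeff n g = 0)).resolve_left
    (sub_ne_zero.mpr hn)

end PowerSeries

open Filter Topology Finset

section qBrace

variable {q : ℝ}

theorem qBrace_succ (hq1 : q ≠ 1) (n : ℕ) :
    qBrace q (n + 1) = 2 * (∑ i ∈ range (n + 1), q ^ i) / (1 + q ^ n) := by
  have h : (q ^ (n + 1) - 1) / (q - 1) = (1 - q ^ (n + 1)) / (1 - q) := by
    rw [← neg_div_neg_eq, neg_sub, neg_sub]
  rw [qBrace, geom_sum_eq hq1, h, Nat.add_sub_cancel, mul_comm (1 - q), ← div_div]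
  ring

theorem qBrace_pos (hq : 0 < q) (hq1 : q ≠ 1) (n : ℕ) : 0 < qBrace q (n + 1) := by
  rw [qBrace_succ hq1]
  positivity

theorem qBraceFact_pos (hq : 0 < q) (hq1 : q ≠ 1) (n : ℕ) : 0 < qBraceFact q n :=
  prod_pos fun k _ ↦ qBrace_pos hq hq1 k

theorem qBraceFact_succ (n : ℕ) : qBraceFact q (n + 1) = qBraceFact q n * qBrace q (n + 1) :=
  prod_range_succ _ _

theorem one_sub_pow_mul_inv_qBraceFact_succ (hq : 0 < q) (hq1 : q ≠ 1) (k : ℕ) :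
    (1 - q ^ (k + 1)) * (qBraceFact q (k + 1))⁻¹ =
      (1 - q) / 2 * (1 + q ^ k) * (qBraceFact q k)⁻¹ := by
  have := qBraceFact_pos hq hq1 k
  have h1 : 1 - q ≠ 0 := sub_ne_zero.mpr hq1.symm
  have h2 : 1 - q ^ (k + 1) ≠ 0 :=
    sub_ne_zero.mpr fun h ↦ hq1 ((pow_eq_one_iff_of_nonneg hq.le k.succ_ne_zero).mp h.symm)
  rw [qBraceFact_succ, qBrace, Nat.add_sub_cancel]
  field_simp

theorem qBrace_inv (hq : 0 < q) (n : ℕ) : qBrace q⁻¹ (n + 1) = qBrace q (n + 1) := by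
  rcases eq_or_ne q 1 with rfl | hq1
  · rw [inv_one]
  have h1 : 1 - q ≠ 0 := sub_ne_zero.mpr hq1.symm
  have h2 : 1 - q⁻¹ ≠ 0 := sub_ne_zero.mpr (inv_ne_one.mpr hq1).symm
  rw [qBrace, qBrace, Nat.add_sub_cancel, inv_pow, inv_pow]
  field_simp
  ring

theorem Rq_inv (hq : 1 < q) : Rq q⁻¹ = Rq q := by
  have : q - 1 ≠ 0 := sub_ne_zero.mpr hq.ne'
  rw [Rq, Rq, if_pos (inv_lt_one_of_one_lt₀ hq), if_neg hq.not_gt]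
  field_simp

theorem tendsto_qBrace_of_lt_one (hq : 0 ≤ q) (hq1 : q < 1) :
    Tendsto (fun n ↦ qBrace q (n + 1)) atTop (𝓝 (2 / (1 - q))) := by
  have h0 := tendsto_pow_atTop_nhds_zero_of_lt_one hq hq1
  have := ((h0.const_mul q).const_sub 1 |>.const_mul 2).div ((h0.const_add 1).const_mul (1 - q))
    (by simp; linarith)
  convert this using 2 with n
  · simp [qBrace, pow_succ']
  · simp

theorem tendsto_qBrace_Rq (hq : 0 < q) (hq1 : q ≠ 1) :
    Tendsto (fun n ↦ qBrace q (n + 1)) atTop (𝓝 (Rq q)) := by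
  rcases hq1.lt_or_gt with h | h
  · rw [Rq, if_pos h]
    exact tendsto_qBrace_of_lt_one hq.le h
  · have h' := inv_lt_one_of_one_lt₀ h
    rw [← Rq_inv h, Rq, if_pos h']
    simpa only [qBrace_inv hq] using tendsto_qBrace_of_lt_one (inv_nonneg.mpr hq.le) h'

end qBrace

open PowerSeries ComplexConjugate

noncomputable def impExpSeries (q : ℝ) : ℂ⟦X⟧ := mk fun n ↦ ((qBraceFact q n : ℂ))⁻¹

section impExp

variable {q : ℝ}

theorem impExpSeries_mul_one_sub_eq (hq : 0 < q) (hq1 : q ≠ 1) :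
    impExpSeries q * (1 - C ((1 - q) / 2 : ℂ) * X) =
      rescale (q : ℂ) (impExpSeries q) * (1 + C ((1 - q) / 2 : ℂ) * X) := by
  refine mul_one_sub_eq_rescale_mul_one_add fun k ↦ ?_
  simp only [impExpSeries, coeff_mk]
  exact_mod_cast one_sub_pow_mul_inv_qBraceFact_succ hq hq1 k

theorem coeff_impExpSeries_mul_rescale_neg_one (hq : 0 < q) (hq1 : q ≠ 1) {n : ℕ}
    (hn : n ≠ 0) :
    coeff n (impExpSeries q * rescale (-1) (impExpSeries q)) = 0 := by
  refine coeff_eq_zero_of_rescale_eq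
    (rescale_mul_rescale_neg_one_self (impExpSeries_mul_one_sub_eq hq hq1)) ?_
  exact_mod_cast (pow_eq_one_iff_of_nonneg hq.le hn).not.mpr hq1

theorem summable_norm_impExp (hq : 0 < q) (hq1 : q ≠ 1) {z : ℂ} (hz : ‖z‖ < Rq q) :
    Summable fun n ↦ ‖z ^ n / (qBraceFact q n : ℂ)‖ := by
  obtain ⟨c, hzc, hcR⟩ := exists_between hz
  have hc : 0 < c := (norm_nonneg z).trans_lt hzc
  refine summable_of_ratio_norm_eventually_le ((div_lt_one hc).mpr hzc) ?_
  filter_upwards [(tendsto_qBrace_Rq hq hq1).eventually (eventually_gt_nhds hcR)] with n hn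
  have hF := qBraceFact_pos hq hq1 n
  have hB := qBrace_pos hq hq1 n
  have hstep : ‖z ^ (n + 1) / (qBraceFact q (n + 1) : ℂ)‖ =
      ‖z‖ / qBrace q (n + 1) * ‖z ^ n / (qBraceFact q n : ℂ)‖ := by
    simp only [norm_div, norm_pow, Complex.norm_real, Real.norm_eq_abs, qBraceFact_succ,
      abs_of_pos hF, abs_of_pos hB, abs_mul]
    ring
  rw [norm_norm, norm_norm, hstep]
  gcongr

theorem impExp_mul_impExp_neg (hq : 0 < q) (hq1 : q ≠ 1) {z : ℂ} (hz : ‖z‖ < Rq q) :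
    impExp q z * impExp q (-z) = 1 := by
  rw [impExp, impExp, tsum_mul_tsum_eq_tsum_sum_antidiagonal_of_summable_norm
    (summable_norm_impExp hq hq1 hz) (summable_norm_impExp hq hq1 (by rwa [norm_neg]))]
  have hterm : ∀ n, ∑ kl ∈ antidiagonal n,
      z ^ kl.1 / (qBraceFact q kl.1 : ℂ) * ((-z) ^ kl.2 / (qBraceFact q kl.2 : ℂ)) =
        z ^ n * coeff n (impExpSeries q * rescale (-1) (impExpSeries q)) := by
    intro n
    rw [coeff_mul, mul_sum]
    refine sum_congr rfl fun kl hkl ↦ ?_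
    rw [← mem_antidiagonal.mp hkl]
    simp only [impExpSeries, coeff_mk, coeff_rescale, neg_pow z, pow_add]
    ring
  simp_rw [hterm]
  rw [tsum_eq_single 0 fun n hn ↦ by
    rw [coeff_impExpSeries_mul_rescale_neg_one hq hq1 hn, mul_zero]]
  simp only [pow_zero, one_mul, coeff_mul, Nat.antidiagonal_zero, sum_singleton, coeff_rescale,
    impExpSeries, coeff_mk, qBraceFact, prod_range_zero]
  norm_num

end impExp

section impTrig

open Complex

theorem impExp_conj (q : ℝ) (z : ℂ) : impExp q (conj z) = conj (impExp q z) := by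
  simp [impExp, conj_tsum, map_div₀]

theorem impExp_neg_I_mul (q x : ℝ) : impExp q (-(I * x)) = conj (impExp q (I * x)) := by
  rw [← impExp_conj, map_mul, conj_I, conj_ofReal, neg_mul]

theorem impCos_eq_re (q x : ℝ) : impCos q x = (impExp q (I * x)).re := by
  rw [impCos, impExp_neg_I_mul, re_eq_add_conj]

theorem impSin_eq_im (q x : ℝ) : impSin q x = (impExp q (I * x)).im := by
  rw [impSin, impExp_neg_I_mul, im_eq_sub_conj]

theorem norm_impExp_I_mul {q : ℝ} (hq : 0 < q) (hq1 : q ≠ 1) {x : ℝ} (hx : |x| < Rq q) :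
    ‖impExp q (I * x)‖ = 1 := by
  have hz : ‖I * x‖ < Rq q := by rwa [norm_mul, norm_I, one_mul, norm_real, Real.norm_eq_abs]
  have h := impExp_mul_impExp_neg hq hq1 hz
  rw [impExp_neg_I_mul, mul_conj', ← ofReal_pow, ofReal_eq_one] at h
  exact (pow_eq_one_iff_of_nonneg (norm_nonneg _) two_ne_zero).mp h

end impTrig

/-- For real `x` with `|x| < R_q`, `Sin_q(x)` and `Cos_q(x)` are real and lie in `[-1, 1]`. -/
theorem impSin_impCos_real_bounded (q : ℝ) (hq : 0 < q) (hq1 : q ≠ 1) (x : ℝ)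
    (hx : |x| < Rq q) :
    (impCos q x).im = 0 ∧ (impSin q x).im = 0 ∧
    -1 ≤ (impCos q x).re ∧ (impCos q x).re ≤ 1 ∧
    -1 ≤ (impSin q x).re ∧ (impSin q x).re ≤ 1 := by
  set E := impExp q (Complex.I * x)
  have hnorm : ‖E‖ = 1 := norm_impExp_I_mul hq hq1 hx
  obtain ⟨hre₁, hre₂⟩ := abs_le.mp (hnorm ▸ E.abs_re_le_norm)
  obtain ⟨him₁, him₂⟩ := abs_le.mp (hnorm ▸ E.abs_im_le_norm)
  rw [impCos_eq_re, impSin_eq_im, Complex.ofReal_im, Complex.ofReal_im, Complex.ofReal_re,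
    Complex.ofReal_re]
  exact ⟨rfl, rfl, hre₁, hre₂, him₁, him₂⟩
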